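/- arXiv:1004.1152 — 2 statements merged into one kernel-verified Lean document; each statement's English description precedes it below -/
import Mathlib

section
/- Let μ be a regular Borel probability measure on [0,1) such that μ([r,1)) > 0 for all 0 < r < 1. Then for any real numbers δ and β, and any function φ on [0,1) with lim_{r→1⁻} φ(r) = α, we have lim_{m→∞} (∫_{[0,1)} φ(r) r^{m+δ} dμ(r)) / (∫_{[0,1)} r^{m+β} dμ(r)) = α. -/
/-!
The weights `r ^ (m + γ)` concentrate at `1`: for `a < s < 1` the mass they give to `[0, a)` is at
most `a ^ (m + γ) μ(ℝ)`, while their total mass on `[0, 1)` is at least `s ^ (m + γ) μ([s, 1))`,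
and the quotient decays like `(a / s) ^ m` because `μ([s, 1)) > 0`. Hence the weighted averages of
a bounded `g` tend to `lim_{r → 1⁻} g r`. With `g = φ` this handles the numerator against the
weights `r ^ (m + δ)`; with `g = r ^ |δ - β|` it shows that replacing `β` by `δ` in the
denominator only changes it by a factor tending to `1`.
-/

open MeasureTheory Filter Set Topology

lemma tendsto_natCast_add_atTop (γ : ℝ) : Tendsto (fun m : ℕ => (m : ℝ) + γ) atTop atTop :=
  tendsto_atTop_add_const_right _ γ tendsto_natCast_atTop_atTop

section RpowMoments

variable {μ : Measure ℝ} [IsFiniteMeasure μ] {e : ℝ}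

lemma integrableOn_rpow_Ico (he : 0 ≤ e) : IntegrableOn (fun r : ℝ => r ^ e) (Ico 0 1) μ :=
  Measure.integrableOn_of_bounded (M := 1) (measure_ne_top μ _)
    (measurable_id.pow_const e).aestronglyMeasurable <| by
      filter_upwards [ae_restrict_mem measurableSet_Ico] with r hr
      rw [Real.norm_of_nonneg (Real.rpow_nonneg hr.1 e)]
      exact Real.rpow_le_one hr.1 hr.2.le he

lemma integrableOn_mul_rpow_Ico {h : ℝ → ℝ} (hm : Measurable h) {C : ℝ}
    (hC : ∀ r ∈ Ico (0 : ℝ) 1, |h r| ≤ C) (he : 0 ≤ e) :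
    IntegrableOn (fun r => h r * r ^ e) (Ico 0 1) μ :=
  (integrableOn_rpow_Ico he).bdd_mul hm.aestronglyMeasurable
    ((ae_restrict_iff' measurableSet_Ico).2 (Eventually.of_forall hC))

lemma setIntegral_rpow_le_of_subset_Ico {t : Set ℝ} (ht : t ⊆ Ico 0 1) (he : 0 ≤ e) :
    ∫ r in t, r ^ e ∂μ ≤ ∫ r in Ico 0 1, r ^ e ∂μ :=
  setIntegral_mono_set (integrableOn_rpow_Ico he)
    ((ae_restrict_iff' measurableSet_Ico).2
      (Eventually.of_forall fun _ hr => Real.rpow_nonneg hr.1 e))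
    ht.eventuallyLE

lemma rpow_mul_measureReal_Ico_le_setIntegral {s : ℝ} (hs : 0 ≤ s) (he : 0 ≤ e) :
    s ^ e * μ.real (Ico s 1) ≤ ∫ r in Ico 0 1, r ^ e ∂μ :=
  calc s ^ e * μ.real (Ico s 1) ≤ ∫ r in Ico s 1, r ^ e ∂μ :=
        setIntegral_ge_of_const_le_real measurableSet_Ico (measure_ne_top μ _)
          (fun _ hr => Real.rpow_le_rpow hs hr.1 he)
          ((integrableOn_rpow_Ico he).mono_set (Ico_subset_Ico_left hs))
    _ ≤ ∫ r in Ico 0 1, r ^ e ∂μ := setIntegral_rpow_le_of_subset_Ico (Ico_subset_Ico_left hs) he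

lemma setIntegral_rpow_Ico_pos (hpos : ∀ r : ℝ, 0 < r → r < 1 → 0 < μ (Ico r 1)) (he : 0 ≤ e) :
    0 < ∫ r in Ico 0 1, r ^ e ∂μ := by
  have hhalf : 0 < μ.real (Ico (1 / 2) 1) :=
    ENNReal.toReal_pos (hpos _ (by norm_num) (by norm_num)).ne' (measure_ne_top μ _)
  exact (mul_pos (Real.rpow_pos_of_pos (by norm_num) e) hhalf).trans_le
    (rpow_mul_measureReal_Ico_le_setIntegral (by norm_num) he)

lemma setIntegral_rpow_Ico_le {a : ℝ} (ha : 0 ≤ a) (he : 0 ≤ e) :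
    ∫ r in Ico 0 a, r ^ e ∂μ ≤ a ^ e * μ.real univ :=
  calc ∫ r in Ico 0 a, r ^ e ∂μ ≤ a ^ e * μ.real (Ico 0 a) := by
        refine (le_abs_self _).trans ?_
        rw [← Real.norm_eq_abs]
        refine norm_setIntegral_le_of_norm_le_const (measure_lt_top μ _) fun r hr => ?_
        rw [Real.norm_of_nonneg (Real.rpow_nonneg hr.1 e)]
        exact Real.rpow_le_rpow hr.1 hr.2.le he
    _ ≤ a ^ e * μ.real univ :=
        mul_le_mul_of_nonneg_left (measureReal_mono (subset_univ _)) (Real.rpow_nonneg ha e)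

lemma tendsto_setIntegral_rpow_Ico_div (hpos : ∀ r : ℝ, 0 < r → r < 1 → 0 < μ (Ico r 1))
    {a : ℝ} (ha₀ : 0 ≤ a) (ha₁ : a < 1) (γ : ℝ) :
    Tendsto (fun m : ℕ => (∫ r in Ico 0 a, r ^ ((m : ℝ) + γ) ∂μ) /
      ∫ r in Ico 0 1, r ^ ((m : ℝ) + γ) ∂μ) atTop (𝓝 0) := by
  obtain ⟨s, has, hs₁⟩ := exists_between ha₁
  have hs₀ : 0 < s := ha₀.trans_lt has
  have hc : 0 < μ.real (Ico s 1) :=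
    ENNReal.toReal_pos (hpos s hs₀ hs₁).ne' (measure_ne_top μ _)
  have hgeom : Tendsto (fun m : ℕ => μ.real univ / μ.real (Ico s 1) * (a / s) ^ ((m : ℝ) + γ))
      atTop (𝓝 0) := by
    simpa using ((tendsto_rpow_atTop_of_base_lt_one _ (by linarith [div_nonneg ha₀ hs₀.le])
      ((div_lt_one hs₀).2 has)).comp (tendsto_natCast_add_atTop γ)).const_mul _
  refine squeeze_zero' (Eventually.of_forall fun m => div_nonneg ?_ ?_) ?_ hgeom
  · exact setIntegral_nonneg measurableSet_Ico fun r hr => Real.rpow_nonneg hr.1 _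
  · exact setIntegral_nonneg measurableSet_Ico fun r hr => Real.rpow_nonneg hr.1 _
  filter_upwards [(tendsto_natCast_add_atTop γ).eventually_ge_atTop 0] with m he
  calc _ ≤ a ^ ((m : ℝ) + γ) * μ.real univ / (s ^ ((m : ℝ) + γ) * μ.real (Ico s 1)) :=
        div_le_div₀ (by positivity) (setIntegral_rpow_Ico_le ha₀ he)
          (mul_pos (Real.rpow_pos_of_pos hs₀ _) hc)
          (rpow_mul_measureReal_Ico_le_setIntegral hs₀.le he)
    _ = _ := by
        rw [Real.div_rpow ha₀ hs₀.le]
        field_simp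

lemma abs_setIntegral_mul_rpow_Ico_le {h : ℝ → ℝ} (hm : Measurable h) {K ε a : ℝ}
    (ha₀ : 0 ≤ a) (ha₁ : a < 1) (hK : ∀ r ∈ Ico (0 : ℝ) 1, |h r| ≤ K)
    (hε : ∀ r ∈ Ico a 1, |h r| ≤ ε) (he : 0 ≤ e) :
    |∫ r in Ico 0 1, h r * r ^ e ∂μ| ≤
      K * ∫ r in Ico 0 a, r ^ e ∂μ + ε * ∫ r in Ico 0 1, r ^ e ∂μ := by
  have hint : IntegrableOn (fun r => |h r * r ^ e|) (Ico 0 1) μ :=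
    (integrableOn_mul_rpow_Ico hm hK he).abs
  have hpt : ∀ r ∈ Ico (0 : ℝ) 1, |h r * r ^ e| = |h r| * r ^ e := fun r hr => by
    rw [abs_mul, abs_of_nonneg (Real.rpow_nonneg hr.1 e)]
  have hsplit : Ico 0 a ∪ Ico a 1 = Ico (0 : ℝ) 1 := Ico_union_Ico_eq_Ico ha₀ ha₁.le
  have hhead : Ico 0 a ⊆ Ico (0 : ℝ) 1 := hsplit ▸ subset_union_left
  have htail : Ico a 1 ⊆ Ico (0 : ℝ) 1 := hsplit ▸ subset_union_right
  calc |∫ r in Ico 0 1, h r * r ^ e ∂μ| ≤ ∫ r in Ico 0 1, |h r * r ^ e| ∂μ :=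
        abs_integral_le_integral_abs
    _ = (∫ r in Ico 0 a, |h r * r ^ e| ∂μ) + ∫ r in Ico a 1, |h r * r ^ e| ∂μ := by
        rw [← hsplit, setIntegral_union Ico_disjoint_Ico_same measurableSet_Ico
          (hint.mono_set hhead) (hint.mono_set htail)]
    _ ≤ (∫ r in Ico 0 a, K * r ^ e ∂μ) + ∫ r in Ico a 1, ε * r ^ e ∂μ := by
        gcongr ?_ + ?_
        · refine setIntegral_mono_on (hint.mono_set hhead)
            (((integrableOn_rpow_Ico he).mono_set hhead).const_mul K) measurableSet_Ico
            fun r hr => ?_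
          rw [hpt r (hhead hr)]
          exact mul_le_mul_of_nonneg_right (hK r (hhead hr)) (Real.rpow_nonneg hr.1 e)
        · refine setIntegral_mono_on (hint.mono_set htail)
            (((integrableOn_rpow_Ico he).mono_set htail).const_mul ε) measurableSet_Ico
            fun r hr => ?_
          rw [hpt r (htail hr)]
          exact mul_le_mul_of_nonneg_right (hε r hr) (Real.rpow_nonneg (htail hr).1 e)
    _ ≤ K * ∫ r in Ico 0 a, r ^ e ∂μ + ε * ∫ r in Ico 0 1, r ^ e ∂μ := by
        have hε₀ : 0 ≤ ε := (abs_nonneg _).trans (hε a ⟨le_rfl, ha₁⟩)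
        have htail_le := setIntegral_rpow_le_of_subset_Ico (μ := μ) htail he
        rw [integral_const_mul, integral_const_mul]
        gcongr

theorem tendsto_setIntegral_mul_rpow_div_setIntegral_rpow
    (hpos : ∀ r : ℝ, 0 < r → r < 1 → 0 < μ (Ico r 1)) {g : ℝ → ℝ} (hgm : Measurable g) {C : ℝ}
    (hgC : ∀ r ∈ Ico (0 : ℝ) 1, |g r| ≤ C) {α : ℝ} (hg : Tendsto g (𝓝[<] 1) (𝓝 α)) (γ : ℝ) :
    Tendsto (fun m : ℕ => (∫ r in Ico 0 1, g r * r ^ ((m : ℝ) + γ) ∂μ) /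
      ∫ r in Ico 0 1, r ^ ((m : ℝ) + γ) ∂μ) atTop (𝓝 α) := by
  rw [Metric.tendsto_atTop]
  intro ε hε
  obtain ⟨a, ha₀, ha₁, hga⟩ : ∃ a, 0 ≤ a ∧ a < 1 ∧ ∀ r ∈ Ico a 1, |g r - α| ≤ ε / 2 := by
    obtain ⟨l, hl, hlg⟩ := mem_nhdsLT_iff_exists_Ico_subset.1
      (hg.eventually (Metric.closedBall_mem_nhds α (half_pos hε)))
    exact ⟨max l 0, le_max_right l 0, max_lt hl one_pos,
      fun r hr => hlg ⟨le_of_max_le_left hr.1, hr.2⟩⟩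
  have hhead := (tendsto_setIntegral_rpow_Ico_div hpos ha₀ ha₁ γ).const_mul (C + |α|)
  rw [mul_zero] at hhead
  obtain ⟨M, hM⟩ := eventually_atTop.1 ((hhead.eventually (gt_mem_nhds (half_pos hε))).and
    ((tendsto_natCast_add_atTop γ).eventually_ge_atTop 0))
  refine ⟨M, fun m hm => ?_⟩
  obtain ⟨hsmall, he⟩ := hM m hm
  set e := (m : ℝ) + γ
  set D := ∫ r in Ico 0 1, r ^ e ∂μ
  have hD : 0 < D := setIntegral_rpow_Ico_pos hpos he
  rw [← mul_div_assoc, div_lt_iff₀ hD] at hsmall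
  have hbound := abs_setIntegral_mul_rpow_Ico_le (μ := μ) (hgm.sub_const α) (K := C + |α|)
    ha₀ ha₁ (fun r hr => by linarith [abs_sub (g r) α, hgC r hr]) hga he
  have hsub :
      ∫ r in Ico 0 1, (g r - α) * r ^ e ∂μ = (∫ r in Ico 0 1, g r * r ^ e ∂μ) - α * D := by
    simp only [sub_mul]
    rw [integral_sub (integrableOn_mul_rpow_Ico hgm hgC he)
      ((integrableOn_rpow_Ico he).const_mul α), integral_const_mul]
  rw [Real.dist_eq, div_sub' hD.ne', abs_div, abs_of_pos hD, div_lt_iff₀ hD, mul_comm D, ← hsub]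
  linarith

lemma tendsto_setIntegral_rpow_div_setIntegral_rpow
    (hpos : ∀ r : ℝ, 0 < r → r < 1 → 0 < μ (Ico r 1)) (δ β : ℝ) :
    Tendsto (fun m : ℕ => (∫ r in Ico 0 1, r ^ ((m : ℝ) + δ) ∂μ) /
      ∫ r in Ico 0 1, r ^ ((m : ℝ) + β) ∂μ) atTop (𝓝 1) := by
  wlog hβδ : β ≤ δ generalizing δ β
  · simpa only [inv_div, inv_one] using (this β δ (le_of_not_ge hβδ)).inv₀ one_ne_zero
  have hlim : Tendsto (fun r : ℝ => r ^ (δ - β)) (𝓝[<] 1) (𝓝 1) := by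
    simpa using (Real.continuousAt_rpow_const 1 (δ - β) (Or.inl one_ne_zero)).tendsto.mono_left
      nhdsWithin_le_nhds
  refine (tendsto_setIntegral_mul_rpow_div_setIntegral_rpow hpos (g := fun r => r ^ (δ - β))
    (measurable_id.pow_const _) (C := 1) (fun r hr => ?_) hlim β).congr' ?_
  · rw [abs_of_nonneg (Real.rpow_nonneg hr.1 _)]
    exact Real.rpow_le_one hr.1 hr.2.le (sub_nonneg.2 hβδ)
  filter_upwards [(tendsto_natCast_add_atTop δ).eventually_gt_atTop 0] with m hm
  congr 1
  refine setIntegral_congr_fun measurableSet_Ico fun r hr => ?_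
  rw [← Real.rpow_add' hr.1 (by linarith), sub_add_add_cancel, add_comm]

end RpowMoments

theorem stmt0_general (μ : Measure ℝ) [IsProbabilityMeasure μ]
    (hpos : ∀ r : ℝ, 0 < r → r < 1 → 0 < μ (Set.Ico r 1))
    (δ β : ℝ) (φ : ℝ → ℝ) (hφm : Measurable φ) (hφb : ∃ C, ∀ r, |φ r| ≤ C)
    (α : ℝ) (hlim : Tendsto φ (nhdsWithin 1 (Set.Ico (0:ℝ) 1)) (nhds α)) :
    Tendsto (fun m : ℕ =>
        (∫ r in Set.Ico (0:ℝ) 1, φ r * r ^ ((m : ℝ) + δ) ∂μ) /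
          (∫ r in Set.Ico (0:ℝ) 1, r ^ ((m : ℝ) + β) ∂μ))
      atTop (nhds α) := by
  obtain ⟨C, hC⟩ := hφb
  rw [nhdsWithin_Ico_eq_nhdsLT zero_lt_one] at hlim
  have hφ := tendsto_setIntegral_mul_rpow_div_setIntegral_rpow hpos hφm (fun r _ => hC r) hlim δ
  have hpow := tendsto_setIntegral_rpow_div_setIntegral_rpow hpos δ β
  have hD : ∀ᶠ m : ℕ in atTop, 0 < ∫ r in Ico 0 1, r ^ ((m : ℝ) + δ) ∂μ :=
    ((tendsto_natCast_add_atTop δ).eventually_ge_atTop 0).mono fun _ he =>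
      setIntegral_rpow_Ico_pos hpos he
  simpa only [mul_one] using
    (hφ.mul hpow).congr' (hD.mono fun _ hm => div_mul_div_cancel₀ hm.ne')

/-- Ratio-limit lemma (one variable): if `μ` is a regular Borel probability measure on `[0,1)`
with `μ([r,1)) > 0` for all `0 < r < 1`, and `φ` is bounded measurable with limit `α` at `1⁻`,
then `(∫ φ(r) r^{m+δ} dμ) / (∫ r^{m+β} dμ) → α` as `m → ∞`. -/
theorem stmt0 (μ : Measure ℝ) [IsProbabilityMeasure μ] (hreg : μ.Regular)
    (hsupp : μ (Set.Ico (0:ℝ) 1)ᶜ = 0)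
    (hpos : ∀ r : ℝ, 0 < r → r < 1 → 0 < μ (Set.Ico r 1))
    (δ β : ℝ) (φ : ℝ → ℝ) (hφm : Measurable φ) (hφb : ∃ C, ∀ r, |φ r| ≤ C)
    (α : ℝ) (hlim : Tendsto φ (nhdsWithin 1 (Set.Ico (0:ℝ) 1)) (nhds α)) :
    Tendsto (fun m : ℕ =>
        (∫ r in Set.Ico (0:ℝ) 1, φ r * r ^ ((m : ℝ) + δ) ∂μ) /
          (∫ r in Set.Ico (0:ℝ) 1, r ^ ((m : ℝ) + β) ∂μ))
      atTop (nhds α) :=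
  stmt0_general μ hpos δ β φ hφm hφb α hlim
end

section
/- Let μ₁,…,μ_N be positive regular Borel measures on [0,1), each satisfying μ_j([r,1)) > 0 for all 0 < r < 1. Suppose φ : [0,1)^N → ℝ is bounded measurable with lim_{(r₁,…,r_N)→(1,…,1)} φ(r) = α. Then for any N-tuples of reals δ = (δ₁,…,δ_N) and β = (β₁,…,β_N), the ratio (∫ φ(r) r₁^{m₁+δ₁}⋯r_N^{m_N+δ_N} dμ₁⋯dμ_N) / (∫ r₁^{m₁+β₁}⋯r_N^{m_N+β_N} dμ₁⋯dμ_N) tends to α as all m_j → ∞. -/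
/-!
As `min mⱼ → ∞`, the weights `∏ rⱼ ^ mⱼ`, normalised by their integral, concentrate at the
corner `(1, …, 1)`. In one variable, for `s < t < 1`,
`∫_{r ≤ s} rⁿ dμ / ∫ rⁿ dμ ≤ (s / t)ⁿ μ[0, 1) / μ[t, 1) → 0`; by Fubini the normalised weight of
`{r | ∃ j, rⱼ ≤ s}` is at most the sum of these one-variable ratios. Hence the normalised average
of a bounded `ψ` with limit `L` at the corner tends to `L`. Real exponents reduce to this case:
fix `K` with all `δⱼ + K, βⱼ + K > 0`, absorb `∏ rⱼ ^ (δⱼ + K)` (resp. `∏ rⱼ ^ (βⱼ + K)`) into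
`ψ`, shift `m` by `K`, and note that the common normalisation cancels in the ratio.
-/

open MeasureTheory Filter Topology Set

section OneDim

variable {μ : Measure ℝ} [IsFiniteMeasure μ]

lemma integrable_pow_of_ae_mem_Ico (h01 : ∀ᵐ r ∂μ, r ∈ Ico (0 : ℝ) 1) (n : ℕ) :
    Integrable (fun r : ℝ => r ^ n) μ :=
  .of_bound (by fun_prop) 1 <| h01.mono fun r hr => by
    rw [Real.norm_eq_abs, abs_of_nonneg (pow_nonneg hr.1 n)]
    exact pow_le_one₀ hr.1 hr.2.le

lemma pow_mul_measureReal_Ico_le_integral_pow (h01 : ∀ᵐ r ∂μ, r ∈ Ico (0 : ℝ) 1) {t : ℝ}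
    (ht : 0 ≤ t) (n : ℕ) : t ^ n * μ.real (Ico t 1) ≤ ∫ r, r ^ n ∂μ :=
  calc t ^ n * μ.real (Ico t 1) ≤ ∫ r in Ico t 1, r ^ n ∂μ :=
        setIntegral_ge_of_const_le_real measurableSet_Ico (measure_ne_top μ _)
          (fun _ hr => pow_le_pow_left₀ ht hr.1 n)
          (integrable_pow_of_ae_mem_Ico h01 n).integrableOn
    _ ≤ ∫ r, r ^ n ∂μ := setIntegral_le_integral (integrable_pow_of_ae_mem_Ico h01 n)
        (h01.mono fun _ hr => pow_nonneg hr.1 n)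

lemma setIntegral_Iic_pow_le (h01 : ∀ᵐ r ∂μ, r ∈ Ico (0 : ℝ) 1) {s : ℝ} (hs : 0 ≤ s) (n : ℕ) :
    ∫ r in Iic s, r ^ n ∂μ ≤ s ^ n * μ.real univ :=
  calc ∫ r in Iic s, r ^ n ∂μ ≤ ∫ _ in Iic s, s ^ n ∂μ :=
        integral_mono_ae (integrable_pow_of_ae_mem_Ico h01 n).integrableOn (integrable_const _) <|
          (ae_restrict_mem measurableSet_Iic).mp <| (ae_restrict_of_ae h01).mono
            fun r hr hrs => pow_le_pow_left₀ hr.1 hrs n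
    _ ≤ s ^ n * μ.real univ := by
        rw [setIntegral_const, smul_eq_mul, mul_comm]
        gcongr
        · exact measure_ne_top μ _
        · exact subset_univ _

lemma measureReal_Ico_pos (hpos : ∀ r : ℝ, 0 < r → r < 1 → 0 < μ (Ico r 1)) {t : ℝ}
    (ht0 : 0 < t) (ht1 : t < 1) : 0 < μ.real (Ico t 1) :=
  ENNReal.toReal_pos (hpos t ht0 ht1).ne' (measure_ne_top μ _)

lemma integral_pow_pos (h01 : ∀ᵐ r ∂μ, r ∈ Ico (0 : ℝ) 1)
    (hpos : ∀ r : ℝ, 0 < r → r < 1 → 0 < μ (Ico r 1)) (n : ℕ) : 0 < ∫ r, r ^ n ∂μ :=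
  (mul_pos (by positivity) (measureReal_Ico_pos hpos (t := 1 / 2) (by norm_num) (by norm_num)))
    |>.trans_le (pow_mul_measureReal_Ico_le_integral_pow h01 (by norm_num) n)

lemma tendsto_setIntegral_Iic_pow_div_integral_pow (h01 : ∀ᵐ r ∂μ, r ∈ Ico (0 : ℝ) 1)
    (hpos : ∀ r : ℝ, 0 < r → r < 1 → 0 < μ (Ico r 1)) {s : ℝ} (hs0 : 0 ≤ s) (hs1 : s < 1) :
    Tendsto (fun n : ℕ => (∫ r in Iic s, r ^ n ∂μ) / ∫ r, r ^ n ∂μ) atTop (𝓝 0) := by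
  obtain ⟨t, hst, ht1⟩ := exists_between hs1
  have ht0 : 0 < t := hs0.trans_lt hst
  have hc := measureReal_Ico_pos hpos ht0 ht1
  have hbound (n : ℕ) : (∫ r in Iic s, r ^ n ∂μ) / ∫ r, r ^ n ∂μ ≤
      (s / t) ^ n * (μ.real univ / μ.real (Ico t 1)) := by
    rw [div_pow, div_mul_div_comm]
    gcongr
    · exact setIntegral_Iic_pow_le h01 hs0 n
    · exact pow_mul_measureReal_Ico_le_integral_pow h01 ht0.le n
  refine squeeze_zero (fun n => div_nonneg ?_ (integral_pow_pos h01 hpos n).le) hbound ?_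
  · exact setIntegral_nonneg_ae measurableSet_Iic (h01.mono fun r hr _ => pow_nonneg hr.1 n)
  · simpa using (tendsto_pow_atTop_nhds_zero_of_lt_one (div_nonneg hs0 ht0.le)
      ((div_lt_one ht0).2 hst)).mul_const (μ.real univ / μ.real (Ico t 1))

end OneDim

lemma setIntegral_iUnion_le_sum {α ι : Type*} [MeasurableSpace α] [Fintype ι] {μ : Measure α}
    {f : α → ℝ} (s : ι → Set α) (hf0 : 0 ≤ᵐ[μ] f) (hf : Integrable f μ) :
    ∫ x in ⋃ i, s i, f x ∂μ ≤ ∑ i, ∫ x in s i, f x ∂μ := by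
  rw [← integral_finsetSum_measure fun i _ => hf.restrict, ← Measure.sum_fintype]
  refine integral_mono_measure Measure.restrict_iUnion_le ?_ ?_
  · exact Measure.ae_sum_iff.2 fun i => ae_restrict_of_ae hf0
  · rw [Measure.sum_fintype]
    exact integrable_finsetSum_measure.2 fun i _ => hf.restrict

section Concentration

variable {α ι : Type*} [MeasurableSpace α] {P : Measure α} {l : Filter ι} {W : ι → α → ℝ}
  {ψ : α → ℝ} {C L : ℝ}

theorem tendsto_integral_mul_div_integral_of_concentrated (hW0 : ∀ n, 0 ≤ᵐ[P] W n)
    (hWi : ∀ n, Integrable (W n) P) (hZ : ∀ n, 0 < ∫ x, W n x ∂P)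
    (hψm : AEStronglyMeasurable ψ P) (hψb : ∀ᵐ x ∂P, |ψ x| ≤ C)
    (hconc : ∀ ε > 0, ∃ U, MeasurableSet U ∧ (∀ᵐ x ∂P, x ∈ U → |ψ x - L| ≤ ε) ∧
      Tendsto (fun n => (∫ x in Uᶜ, W n x ∂P) / ∫ x, W n x ∂P) l (𝓝 0)) :
    Tendsto (fun n => (∫ x, ψ x * W n x ∂P) / ∫ x, W n x ∂P) l (𝓝 L) := by
  rw [Metric.tendsto_nhds]
  intro ε hε
  obtain ⟨U, hU, hψU, htail⟩ := hconc (ε / 2) (half_pos hε)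
  set D := |C| + |L|
  have hD : 0 ≤ D := by positivity
  filter_upwards [(htail.const_mul D).eventually_lt_const
    (show D * 0 < ε / 2 by rw [mul_zero]; positivity)] with n hn
  set Z := ∫ x, W n x ∂P
  have hZn : 0 < Z := hZ n
  have hψW : Integrable (fun x => ψ x * W n x) P :=
    (hWi n).bdd_mul hψm (hψb.mono fun x hx => hx.trans (le_abs_self C))
  have hbound : ∀ᵐ x ∂P, ‖(ψ x - L) * W n x‖ ≤ ε / 2 * W n x + D * Uᶜ.indicator (W n) x := by
    filter_upwards [hW0 n, hψb, hψU] with x hW hb hU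
    rw [Real.norm_eq_abs, abs_mul, abs_of_nonneg hW]
    by_cases hx : x ∈ U
    · rw [indicator_of_notMem (not_not_intro hx), mul_zero, add_zero]
      exact mul_le_mul_of_nonneg_right (hU hx) hW
    · rw [indicator_of_mem hx]
      have : |ψ x - L| ≤ D := (abs_sub _ _).trans (add_le_add_left (hb.trans (le_abs_self C)) _)
      nlinarith [mul_le_mul_of_nonneg_right this hW, mul_nonneg (half_pos hε).le hW]
  have hdiff : |∫ x, ψ x * W n x ∂P - L * Z| ≤ ε / 2 * Z + D * ∫ x in Uᶜ, W n x ∂P := by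
    have hint := ((hWi n).const_mul (ε / 2)).add (((hWi n).indicator hU.compl).const_mul D)
    calc |∫ x, ψ x * W n x ∂P - L * Z| = ‖∫ x, (ψ x - L) * W n x ∂P‖ := by
          simp only [sub_mul, integral_sub hψW ((hWi n).const_mul L), integral_const_mul,
            Real.norm_eq_abs, Z]
      _ ≤ ∫ x, (ε / 2 * W n x + D * Uᶜ.indicator (W n) x) ∂P :=
          norm_integral_le_of_norm_le hint hbound
      _ = ε / 2 * Z + D * ∫ x in Uᶜ, W n x ∂P := by
          rw [integral_add ((hWi n).const_mul _) (((hWi n).indicator hU.compl).const_mul _),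
            integral_const_mul, integral_const_mul, integral_indicator hU.compl]
  calc dist ((∫ x, ψ x * W n x ∂P) / Z) L = |∫ x, ψ x * W n x ∂P - L * Z| / Z := by
        rw [Real.dist_eq, div_sub' hZn.ne', abs_div, abs_of_pos hZn, mul_comm Z L]
    _ ≤ (ε / 2 * Z + D * ∫ x in Uᶜ, W n x ∂P) / Z := by gcongr
    _ = ε / 2 + D * ((∫ x in Uᶜ, W n x ∂P) / Z) := by
        rw [add_div, mul_div_cancel_right₀ _ hZn.ne', mul_div_assoc]
    _ < ε := by linarith

end Concentration

section Product

variable {ι : Type*} [Fintype ι] {μ : ι → Measure ℝ}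

lemma ae_pi_mem_Ico [∀ i, SigmaFinite (μ i)] (h01 : ∀ i, ∀ᵐ r ∂μ i, r ∈ Ico (0 : ℝ) 1) :
    ∀ᵐ r ∂Measure.pi μ, ∀ i, r i ∈ Ico (0 : ℝ) 1 :=
  eventually_all.2 fun i => Measure.tendsto_eval_ae_ae.eventually (h01 i)

lemma ae_prod_mem_Icc [∀ i, SigmaFinite (μ i)] (h01 : ∀ i, ∀ᵐ r ∂μ i, r ∈ Ico (0 : ℝ) 1)
    {f : ι → ℝ → ℝ} (hf : ∀ i, MapsTo (f i) (Ico 0 1) (Icc 0 1)) :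
    ∀ᵐ r ∂Measure.pi μ, ∏ i, f i (r i) ∈ Icc (0 : ℝ) 1 :=
  (ae_pi_mem_Ico h01).mono fun _ hr =>
    ⟨Finset.prod_nonneg fun i _ => (hf i (hr i)).1,
      Finset.prod_le_one (fun i _ => (hf i (hr i)).1) fun i _ => (hf i (hr i)).2⟩

lemma mapsTo_pow_Ico_Icc (n : ℕ) : MapsTo (fun x : ℝ => x ^ n) (Ico 0 1) (Icc 0 1) :=
  fun _ hx => ⟨pow_nonneg hx.1 n, pow_le_one₀ hx.1 hx.2.le⟩

lemma setIntegral_eval_preimage_prod_pow [∀ i, SigmaFinite (μ i)] [DecidableEq ι] (k : ι)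
    (s : Set ℝ) (n : ι → ℕ) :
    ∫ r in Function.eval k ⁻¹' s, ∏ i, r i ^ n i ∂Measure.pi μ =
      (∫ r in s, r ^ n k ∂μ k) * ∏ i ∈ Finset.univ.erase k, ∫ r, r ^ n i ∂μ i := by
  rw [eval_preimage, Measure.restrict_pi_pi, integral_fintype_prod_eq_prod (fun i r => r ^ n i),
    ← Finset.mul_prod_erase _ _ (Finset.mem_univ k), Function.update_self]
  congr 1
  refine Finset.prod_congr rfl fun i hi => ?_
  rw [Function.update_of_ne (Finset.ne_of_mem_erase hi), Measure.restrict_univ]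

lemma integrable_prod_pow [∀ i, IsFiniteMeasure (μ i)]
    (h01 : ∀ i, ∀ᵐ r ∂μ i, r ∈ Ico (0 : ℝ) 1) (n : ι → ℕ) :
    Integrable (fun r => ∏ i, r i ^ n i) (Measure.pi μ) :=
  .fintype_prod fun i => integrable_pow_of_ae_mem_Ico (h01 i) (n i)

lemma integral_prod_pow_pos [∀ i, IsFiniteMeasure (μ i)]
    (h01 : ∀ i, ∀ᵐ r ∂μ i, r ∈ Ico (0 : ℝ) 1)
    (hpos : ∀ i, ∀ r : ℝ, 0 < r → r < 1 → 0 < μ i (Ico r 1)) (n : ι → ℕ) :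
    0 < ∫ r, ∏ i, r i ^ n i ∂Measure.pi μ := by
  rw [integral_fintype_prod_eq_prod (fun i r => r ^ n i)]
  exact Finset.prod_pos fun i _ => integral_pow_pos (h01 i) (hpos i) (n i)

lemma tendsto_setIntegral_compl_pi_Ioi_prod_pow_div_integral_prod_pow [∀ i, IsFiniteMeasure (μ i)]
    (h01 : ∀ i, ∀ᵐ r ∂μ i, r ∈ Ico (0 : ℝ) 1)
    (hpos : ∀ i, ∀ r : ℝ, 0 < r → r < 1 → 0 < μ i (Ico r 1)) {s : ℝ} (hs0 : 0 ≤ s)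
    (hs1 : s < 1) :
    Tendsto (fun n : ι → ℕ => (∫ r in (univ.pi fun _ => Ioi s)ᶜ, ∏ i, r i ^ n i ∂Measure.pi μ) /
      ∫ r, ∏ i, r i ^ n i ∂Measure.pi μ) atTop (𝓝 0) := by
  classical
  have hW0 (n : ι → ℕ) : 0 ≤ᵐ[Measure.pi μ] fun r => ∏ i, r i ^ n i :=
    (ae_prod_mem_Icc h01 fun i => mapsTo_pow_Ico_Icc (n i)).mono fun _ h => h.1
  have hcompl : (univ.pi fun _ : ι => Ioi s)ᶜ = ⋃ k, Function.eval k ⁻¹' Iic s := by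
    ext r
    simp
  have hbound (n : ι → ℕ) :
      (∫ r in (univ.pi fun _ => Ioi s)ᶜ, ∏ i, r i ^ n i ∂Measure.pi μ) /
        ∫ r, ∏ i, r i ^ n i ∂Measure.pi μ ≤
      ∑ k, (∫ r in Iic s, r ^ n k ∂μ k) / ∫ r, r ^ n k ∂μ k := by
    rw [div_le_iff₀ (integral_prod_pow_pos h01 hpos n), integral_fintype_prod_eq_prod
      (fun i r => r ^ n i), hcompl, Finset.sum_mul]
    refine (setIntegral_iUnion_le_sum _ (hW0 n) (integrable_prod_pow h01 n)).trans_eq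
      (Finset.sum_congr rfl fun k _ => ?_)
    rw [setIntegral_eval_preimage_prod_pow, ← Finset.mul_prod_erase Finset.univ
      (fun i => ∫ r, r ^ n i ∂μ i) (Finset.mem_univ k)]
    field_simp [(integral_pow_pos (h01 k) (hpos k) (n k)).ne']
  refine squeeze_zero (fun n => div_nonneg (integral_nonneg_of_ae (ae_restrict_of_ae (hW0 n)))
    (integral_nonneg_of_ae (hW0 n))) hbound ?_
  simpa using tendsto_finsetSum _ fun k _ =>
    (tendsto_setIntegral_Iic_pow_div_integral_pow (h01 k) (hpos k) hs0 hs1).comp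
      (tendsto_atTop_atTop_of_monotone (fun _ _ h => Pi.le_def.1 h k)
        fun b => ⟨fun _ => b, le_rfl⟩)

theorem tendsto_integral_mul_prod_pow_div_integral_prod_pow [∀ i, IsFiniteMeasure (μ i)]
    (h01 : ∀ i, ∀ᵐ r ∂μ i, r ∈ Ico (0 : ℝ) 1)
    (hpos : ∀ i, ∀ r : ℝ, 0 < r → r < 1 → 0 < μ i (Ico r 1)) {ψ : (ι → ℝ) → ℝ} {C L : ℝ}
    (hψm : AEStronglyMeasurable ψ (Measure.pi μ)) (hψb : ∀ᵐ r ∂Measure.pi μ, |ψ r| ≤ C)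
    (hψ : Tendsto ψ (𝓝[univ.pi fun _ => Ico 0 1] fun _ => 1) (𝓝 L)) :
    Tendsto (fun n : ι → ℕ => (∫ r, ψ r * ∏ i, r i ^ n i ∂Measure.pi μ) /
      ∫ r, ∏ i, r i ^ n i ∂Measure.pi μ) atTop (𝓝 L) := by
  refine tendsto_integral_mul_div_integral_of_concentrated
    (fun n => (ae_prod_mem_Icc h01 fun i => mapsTo_pow_Ico_Icc (n i)).mono fun _ h => h.1)
    (integrable_prod_pow h01) (integral_prod_pow_pos h01 hpos) hψm hψb fun ε hε => ?_
  obtain ⟨d, hd, hψd⟩ := Metric.tendsto_nhdsWithin_nhds.1 hψ ε hε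
  have hs1 : max (1 - d) 0 < 1 := max_lt (by linarith) one_pos
  refine ⟨univ.pi fun _ => Ioi (max (1 - d) 0), .univ_pi fun _ => measurableSet_Ioi, ?_,
    tendsto_setIntegral_compl_pi_Ioi_prod_pow_div_integral_prod_pow h01 hpos (le_max_right _ _) hs1⟩
  filter_upwards [ae_pi_mem_Ico h01] with r hr hrs
  have hdist : dist r (fun _ => 1) < d := by
    refine (dist_pi_lt_iff hd).2 fun i => ?_
    have hri : max (1 - d) 0 < r i := mem_univ_pi.1 hrs i
    rw [Real.dist_eq, abs_sub_lt_iff]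
    constructor <;> linarith [(hr i).2, le_max_left (1 - d) 0]
  exact (Real.dist_eq _ _ ▸ hψd (mem_univ_pi.2 hr) hdist).le

end Product

section RealExponents

variable {ι : Type*} [Fintype ι] {μ : ι → Measure ℝ}

lemma rpow_natCast_add_eq_rpow_mul_pow {x γ : ℝ} (hx : 0 ≤ x) {K m : ℕ} (hKm : K ≤ m)
    (hγ : 0 < γ + K) : x ^ ((m : ℝ) + γ) = x ^ (γ + K) * x ^ (m - K) := by
  rw [← Real.rpow_natCast x (m - K), ← Real.rpow_add' hx, Nat.cast_sub hKm]
  · congr 1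
    ring
  · exact (add_pos_of_pos_of_nonneg hγ (Nat.cast_nonneg _)).ne'

lemma mapsTo_rpow_Ico_Icc {γ : ℝ} (hγ : 0 ≤ γ) :
    MapsTo (fun x : ℝ => x ^ γ) (Ico 0 1) (Icc 0 1) :=
  fun _ hx => ⟨Real.rpow_nonneg hx.1 γ, Real.rpow_le_one hx.1 hx.2.le hγ⟩

lemma tendsto_prod_rpow_nhdsWithin_one (γ : ι → ℝ) (s : Set (ι → ℝ)) :
    Tendsto (fun r : ι → ℝ => ∏ i, r i ^ γ i) (𝓝[s] fun _ => 1) (𝓝 1) := by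
  have h (i : ι) : Tendsto (fun r : ι → ℝ => r i ^ γ i) (𝓝 fun _ => 1) (𝓝 1) := by
    simpa [Function.comp_def] using
      (Real.continuousAt_rpow_const 1 (γ i) (.inl one_ne_zero)).tendsto.comp
        ((continuous_apply i).tendsto _)
  simpa using (tendsto_finsetProd Finset.univ fun i _ => h i).mono_left nhdsWithin_le_nhds

lemma setIntegral_pi_Ico_mul_prod_rpow [∀ i, SigmaFinite (μ i)]
    (h01 : ∀ i, ∀ᵐ r ∂μ i, r ∈ Ico (0 : ℝ) 1) (f : (ι → ℝ) → ℝ) {γ : ι → ℝ} {K : ℕ}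
    (hγ : ∀ i, 0 < γ i + K) {m : ι → ℕ} (hm : ∀ i, K ≤ m i) :
    ∫ r in univ.pi fun _ => Ico 0 1, f r * ∏ i, r i ^ ((m i : ℝ) + γ i) ∂Measure.pi μ =
      ∫ r, (f r * ∏ i, r i ^ (γ i + K)) * ∏ i, r i ^ (m i - K) ∂Measure.pi μ := by
  have hcube := ae_pi_mem_Ico h01
  rw [Measure.restrict_eq_self_of_ae_mem (hcube.mono fun _ hr => mem_univ_pi.2 hr)]
  refine integral_congr_ae (hcube.mono fun r hr => ?_)
  simp only [mul_assoc, ← Finset.prod_mul_distrib]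
  exact congrArg _ (Finset.prod_congr rfl fun i _ =>
    rpow_natCast_add_eq_rpow_mul_pow (hr i).1 (hm i) (hγ i))

theorem tendsto_integral_mul_prod_rpow_mul_prod_pow_div_integral_prod_pow
    [∀ i, IsFiniteMeasure (μ i)]
    (h01 : ∀ i, ∀ᵐ r ∂μ i, r ∈ Ico (0 : ℝ) 1)
    (hpos : ∀ i, ∀ r : ℝ, 0 < r → r < 1 → 0 < μ i (Ico r 1)) {φ : (ι → ℝ) → ℝ} {C L : ℝ}
    (hφm : Measurable φ) (hφb : ∀ r, |φ r| ≤ C)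
    (hφ : Tendsto φ (𝓝[univ.pi fun _ => Ico 0 1] fun _ => 1) (𝓝 L)) {γ : ι → ℝ}
    (hγ : ∀ i, 0 ≤ γ i) :
    Tendsto (fun n : ι → ℕ => (∫ r, (φ r * ∏ i, r i ^ γ i) * ∏ i, r i ^ n i ∂Measure.pi μ) /
      ∫ r, ∏ i, r i ^ n i ∂Measure.pi μ) atTop (𝓝 L) := by
  refine tendsto_integral_mul_prod_pow_div_integral_prod_pow h01 hpos (C := C) (by fun_prop)
    ((ae_prod_mem_Icc h01 fun i => mapsTo_rpow_Ico_Icc (hγ i)).mono fun r h => ?_)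
    (by simpa using hφ.mul (tendsto_prod_rpow_nhdsWithin_one γ _))
  rw [abs_mul, abs_of_nonneg h.1]
  exact (mul_le_mul_of_nonneg_right (hφb r) h.1).trans
    (mul_le_of_le_one_right ((abs_nonneg _).trans (hφb r)) h.2)

end RealExponents

theorem stmt1_general (N : ℕ) (μs : Fin N → Measure ℝ) [∀ j, IsFiniteMeasure (μs j)]
    (hsupp : ∀ j, μs j (Set.Ico (0:ℝ) 1)ᶜ = 0)
    (hpos : ∀ j, ∀ r : ℝ, 0 < r → r < 1 → 0 < μs j (Set.Ico r 1))
    (δ β : Fin N → ℝ) (φ : (Fin N → ℝ) → ℝ) (hφm : Measurable φ)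
    (hφb : ∃ C, ∀ r, |φ r| ≤ C) (α : ℝ)
    (hlim : Tendsto φ (nhdsWithin (fun _ => 1) (Set.univ.pi fun _ => Set.Ico (0:ℝ) 1))
      (nhds α)) :
    Tendsto (fun m : Fin N → ℕ =>
        (∫ r in Set.univ.pi (fun _ => Set.Ico (0:ℝ) 1),
            φ r * ∏ j, r j ^ ((m j : ℝ) + δ j) ∂Measure.pi μs) /
          (∫ r in Set.univ.pi (fun _ => Set.Ico (0:ℝ) 1),
            ∏ j, r j ^ ((m j : ℝ) + β j) ∂Measure.pi μs))
      atTop (nhds α) := by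
  obtain ⟨C, hC⟩ := hφb
  have h01 (j : Fin N) : ∀ᵐ r ∂μs j, r ∈ Ico (0 : ℝ) 1 := mem_ae_iff.2 (hsupp j)
  obtain ⟨K, hK⟩ := (eventually_all.2 fun j =>
    (tendsto_natCast_atTop_atTop.eventually_gt_atTop (-δ j)).and
      (tendsto_natCast_atTop_atTop.eventually_gt_atTop (-β j))).exists
  have hδ (j : Fin N) : 0 < δ j + K := by linarith [(hK j).1]
  have hβ (j : Fin N) : 0 < β j + K := by linarith [(hK j).2]
  have hnum := tendsto_integral_mul_prod_rpow_mul_prod_pow_div_integral_prod_pow (μ := μs)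
    h01 hpos hφm hC hlim fun j => (hδ j).le
  have hden := tendsto_integral_mul_prod_rpow_mul_prod_pow_div_integral_prod_pow (μ := μs)
    h01 hpos measurable_const (fun _ => (abs_one (α := ℝ)).le) tendsto_const_nhds fun j => (hβ j).le
  have hshift : Tendsto (fun m : Fin N → ℕ => fun j => m j - K) atTop atTop :=
    tendsto_atTop_atTop_of_monotone (fun _ _ h j => Nat.sub_le_sub_right (h j) K)
      fun b => ⟨fun j => b j + K, fun j => by simp⟩
  have hratio := (hnum.div hden one_ne_zero).comp hshift
  rw [div_one] at hratio
  refine hratio.congr' ?_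
  filter_upwards [eventually_ge_atTop fun _ => K] with m hm
  have hnum_eq := setIntegral_pi_Ico_mul_prod_rpow h01 φ hδ hm
  have hden_eq := setIntegral_pi_Ico_mul_prod_rpow h01 (fun _ => 1) hβ hm
  simp only [one_mul] at hden_eq ⊢
  rw [hnum_eq, hden_eq]
  exact div_div_div_cancel_right₀ (integral_prod_pow_pos h01 hpos _).ne' _ _

/-- Ratio-limit lemma (several variables): if `μ₁,…,μ_N` are finite regular Borel measures on
`[0,1)` with `μ_j([r,1)) > 0` for `0 < r < 1`, and `φ` is bounded measurable on `[0,1)^N`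
with limit `α` at `(1,…,1)`, then for any tuples of reals `δ, β`,
`(∫ φ(r) ∏ r_j^{m_j+δ_j} dμ) / (∫ ∏ r_j^{m_j+β_j} dμ) → α` as all `m_j → ∞`. -/
theorem stmt1 (N : ℕ) (μs : Fin N → Measure ℝ) [∀ j, IsFiniteMeasure (μs j)]
    (hreg : ∀ j, (μs j).Regular)
    (hsupp : ∀ j, μs j (Set.Ico (0:ℝ) 1)ᶜ = 0)
    (hpos : ∀ j, ∀ r : ℝ, 0 < r → r < 1 → 0 < μs j (Set.Ico r 1))
    (δ β : Fin N → ℝ) (φ : (Fin N → ℝ) → ℝ) (hφm : Measurable φ)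
    (hφb : ∃ C, ∀ r, |φ r| ≤ C) (α : ℝ)
    (hlim : Tendsto φ (nhdsWithin (fun _ => 1) (Set.univ.pi fun _ => Set.Ico (0:ℝ) 1))
      (nhds α)) :
    Tendsto (fun m : Fin N → ℕ =>
        (∫ r in Set.univ.pi (fun _ => Set.Ico (0:ℝ) 1),
            φ r * ∏ j, r j ^ ((m j : ℝ) + δ j) ∂Measure.pi μs) /
          (∫ r in Set.univ.pi (fun _ => Set.Ico (0:ℝ) 1),
            ∏ j, r j ^ ((m j : ℝ) + β j) ∂Measure.pi μs))
      atTop (nhds α) :=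
  stmt1_general N μs hsupp hpos δ β φ hφm hφb α hlim
end
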